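/- Nonadaptive composition for iid databases: if the entries of the database are iid with common marginal, F = (F₁,…,F_m) are symmetric queries answered on the blocks of a uniform injective (n₁,…,n_m)-random partition T with ∑ n_k = n, then F∘SAMP_T achieves (ε, δ)-statistical privacy for entry j with δ = ∑_{k=1}^m (n_k/n) · max_{v,w} D_ε(ν_{n_k,v} K_{F_k}, ν_{n_k,w} K_{F_k}), where ν_{s,v} is the distribution of an iid database of size s with one entry fixed to v. -/

import Mathlib

/-- Hockey-stick divergence (privacy curve) of two distributions on a finite set. -/
noncomputable def hsDiv {A : Type*} [Fintype A] (ε : ℝ) (p q : A → ℝ) : ℝ :=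
  ∑ a, max 0 (p a - Real.exp ε * q a)

/-- `p` is a probability mass function on a finite set. -/
def IsPMF {A : Type*} [Fintype A] (p : A → ℝ) : Prop :=
  (∀ a, 0 ≤ p a) ∧ ∑ a, p a = 1

/-- Pushforward of a distribution through a Markov kernel. -/
noncomputable def pushKer {X A : Type*} [Fintype X] (μ : X → ℝ) (K : X → A → ℝ) : A → ℝ :=
  fun a => ∑ x, μ x * K x a

def partitions (n m : ℕ) (nk : Fin m → ℕ) : Finset (Fin n → Fin m) :=
  Finset.univ.filter (fun f => ∀ k, (Finset.univ.filter (fun i => f i = k)).card = nk k)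

/-- Distribution of an iid-`ν` database of size `s` with the first entry fixed to `v`. -/
noncomputable def iidFix {W : Type*} [Fintype W] [DecidableEq W] {s : ℕ} (hs : 0 < s)
    (ν : W → ℝ) (v : W) : (Fin s → W) → ℝ :=
  fun x => ∏ l, if l = (⟨0, hs⟩ : Fin s) then (if x l = v then (1 : ℝ) else 0) else ν (x l)

/-! For a fixed partition the blocks of an iid database are independent, so the joint law of the
answers is the product over blocks of the per-block answer laws. Only the block containing `j`
depends on the value at `j`, and since its query is symmetric, that block sees `ν_{n_k,v}` whatever
the position of `j` inside it. The hockey-stick divergence of two product laws that differ in a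
single factor is the divergence of that factor. Finally, exchangeability of the positions under the
uniform random partition puts `j` in block `k` with probability `n_k / n`. -/

open Finset

section HockeyStick

variable {A : Type*} [Fintype A]

theorem sum_le_exp_mul_sum_add_hsDiv (ε : ℝ) (p q : A → ℝ) (S : Finset A) :
    ∑ a ∈ S, p a ≤ Real.exp ε * ∑ a ∈ S, q a + hsDiv ε p q := by
  have h : ∑ a ∈ S, (p a - Real.exp ε * q a) ≤ hsDiv ε p q :=
    calc ∑ a ∈ S, (p a - Real.exp ε * q a)
        ≤ ∑ a ∈ S, max 0 (p a - Real.exp ε * q a) := sum_le_sum fun _ _ => le_max_right _ _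
      _ ≤ hsDiv ε p q :=
        sum_le_sum_of_subset_of_nonneg (subset_univ S) fun _ _ _ => le_max_left _ _
  rw [sum_sub_distrib, ← mul_sum] at h
  linarith

theorem hsDiv_pi_eq {ι : Type*} [Fintype ι] [DecidableEq ι] (ε : ℝ) (k₀ : ι) {p q : ι → A → ℝ}
    (hpq : ∀ k ≠ k₀, p k = q k) (hp : ∀ k ≠ k₀, IsPMF (p k)) :
    hsDiv ε (fun a : ι → A => ∏ k, p k (a k)) (fun a => ∏ k, q k (a k)) = hsDiv ε (p k₀) (q k₀) := by
  set r : ι → A → ℝ := Function.update p k₀ fun c => max 0 (p k₀ c - Real.exp ε * q k₀ c)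
  have hr : ∀ k ≠ k₀, r k = p k := fun k hk => Function.update_of_ne hk _ _
  have hpointwise : ∀ a : ι → A,
      max 0 (∏ k, p k (a k) - Real.exp ε * ∏ k, q k (a k)) = ∏ k, r k (a k) := by
    intro a
    have hrest : ∏ k ∈ {k₀}ᶜ, q k (a k) = ∏ k ∈ {k₀}ᶜ, p k (a k) :=
      prod_congr rfl fun k hk => by rw [hpq k (by simpa using hk)]
    have hrest_nonneg : 0 ≤ ∏ k ∈ {k₀}ᶜ, p k (a k) :=
      prod_nonneg fun k hk => (hp k (by simpa using hk)).1 _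
    have hr_rest : ∏ k ∈ {k₀}ᶜ, r k (a k) = ∏ k ∈ {k₀}ᶜ, p k (a k) :=
      prod_congr rfl fun k hk => by rw [hr k (by simpa using hk)]
    rw [Fintype.prod_eq_mul_prod_compl k₀ (fun k => p k (a k)),
      Fintype.prod_eq_mul_prod_compl k₀ (fun k => q k (a k)),
      Fintype.prod_eq_mul_prod_compl k₀ (fun k => r k (a k)), hrest, hr_rest]
    simp only [r, Function.update_self]
    rw [← mul_assoc, ← sub_mul, max_mul_of_nonneg _ _ hrest_nonneg, zero_mul]
  have hsum_r : ∀ k, ∑ c, r k c = if k = k₀ then hsDiv ε (p k₀) (q k₀) else 1 := by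
    intro k
    split_ifs with hk
    · subst hk; simp [r, hsDiv]
    · rw [hr k hk, (hp k hk).2]
  simp only [hsDiv, hpointwise, ← Fintype.prod_sum, hsum_r, prod_ite_eq', mem_univ, if_true]

end HockeyStick

theorem IsPMF.pi {ι W : Type*} [Fintype ι] [DecidableEq ι] [Fintype W] {ν : W → ℝ}
    (hν : IsPMF ν) : IsPMF fun x : ι → W => ∏ i, ν (x i) :=
  ⟨fun _ => prod_nonneg fun _ _ => hν.1 _, by rw [← Fintype.prod_sum, hν.2, prod_const_one]⟩

theorem IsPMF.pushKer {X A : Type*} [Fintype X] [Fintype A] {μ : X → ℝ} {K : X → A → ℝ}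
    (hμ : IsPMF μ) (hK : ∀ x, IsPMF (K x)) : IsPMF (pushKer μ K) := by
  refine ⟨fun a => sum_nonneg fun x _ => mul_nonneg (hμ.1 x) ((hK x).1 a), ?_⟩
  simp only [_root_.pushKer]
  rw [sum_comm]
  simp only [← mul_sum, (hK _).2, mul_one, hμ.2]

/-- `∏ i, fixWeight j ν v i (D i)` is the law of an iid-`ν` database `D` with entry `j` fixed
to `v`. -/
def fixWeight {ι W : Type*} [DecidableEq ι] [DecidableEq W] (j : ι) (ν : W → ℝ) (v : W)
    (i : ι) (u : W) : ℝ :=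
  if i = j then (if u = v then 1 else 0) else ν u

section FixWeight

variable {ι κ W : Type*} [DecidableEq ι] [DecidableEq κ] [DecidableEq W] (ν : W → ℝ) (v : W)

theorem fixWeight_of_ne {i j : ι} (h : i ≠ j) : fixWeight j ν v i = ν := by
  funext u
  simp [fixWeight, h]

theorem fixWeight_comp_injective {g : κ → ι} (hg : Function.Injective g) {l₀ : κ} {j : ι}
    (h : g l₀ = j) (l : κ) : fixWeight j ν v (g l) = fixWeight l₀ ν v l := by
  subst h
  funext u
  simp only [fixWeight, hg.eq_iff]

theorem prod_fixWeight_comp_perm [Fintype ι] (σ : Equiv.Perm ι) (j : ι) (x : ι → W) :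
    ∏ i, fixWeight j ν v i (x (σ i)) = ∏ i, fixWeight (σ j) ν v i (x i) :=
  Fintype.prod_equiv σ _ _ fun i => by rw [fixWeight_comp_injective ν v σ.injective rfl]

end FixWeight

theorem pushKer_comp_perm {ι W A : Type*} [Fintype ι] [DecidableEq ι] [Fintype W] [DecidableEq W]
    (μ : (ι → W) → ℝ) {G : (ι → W) → A → ℝ} (hG : ∀ (σ : Equiv.Perm ι) x, G (x ∘ σ) = G x)
    (σ : Equiv.Perm ι) : pushKer (fun x => μ (x ∘ σ)) G = pushKer μ G := by
  funext a
  exact Fintype.sum_equiv (σ.arrowCongr (Equiv.refl W)).symm _ _ fun x => by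
    simp [Equiv.arrowCongr, hG]

theorem pushKer_prod_fixWeight_eq {ι W A : Type*} [Fintype ι] [DecidableEq ι] [Fintype W]
    [DecidableEq W] (ν : W → ℝ) (v : W) {G : (ι → W) → A → ℝ}
    (hG : ∀ (σ : Equiv.Perm ι) x, G (x ∘ σ) = G x) (j j' : ι) :
    pushKer (fun x => ∏ i, fixWeight j ν v i (x i)) G
      = pushKer (fun x => ∏ i, fixWeight j' ν v i (x i)) G := by
  have hperm : (fun x : ι → W => ∏ i, fixWeight j ν v i (x i))
      = fun x => ∏ i, fixWeight j' ν v i ((x ∘ Equiv.swap j' j) i) := by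
    funext x
    have h := prod_fixWeight_comp_perm ν v (Equiv.swap j' j) j' x
    rw [Equiv.swap_apply_left] at h
    exact h.symm
  rw [hperm]
  exact pushKer_comp_perm (fun x => ∏ i, fixWeight j' ν v i (x i)) hG _

theorem pushKer_prod_fixWeight_eq_iidFix {s : ℕ} {W A : Type*} [Fintype W] [DecidableEq W]
    (hs : 0 < s) (ν : W → ℝ) (v : W) {G : (Fin s → W) → A → ℝ}
    (hG : ∀ (σ : Equiv.Perm (Fin s)) x, G (x ∘ σ) = G x) (j : Fin s) :
    pushKer (fun x => ∏ i, fixWeight j ν v i (x i)) G = pushKer (iidFix hs ν v) G :=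
  pushKer_prod_fixWeight_eq ν v hG j ⟨0, hs⟩

theorem sum_prod_mul_prod_eq_prod_pushKer {κ ι W A : Type*} [Fintype κ] [DecidableEq κ]
    {β : κ → Type*} [∀ k, Fintype (β k)] [∀ k, DecidableEq (β k)] [Fintype ι] [DecidableEq ι]
    [Fintype W] (σ : (Σ k, β k) ≃ ι) (w : ι → W → ℝ) (G : (k : κ) → (β k → W) → A → ℝ)
    (a : κ → A) :
    ∑ D : ι → W, (∏ i, w i (D i)) * ∏ k, G k (fun l => D (σ ⟨k, l⟩)) (a k)
      = ∏ k, pushKer (fun x => ∏ l, w (σ ⟨k, l⟩) (x l)) (G k) (a k) := by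
  let restrict : (ι → W) ≃ ((k : κ) → β k → W) :=
    (σ.arrowCongr (Equiv.refl W)).symm.trans (Equiv.piCurry fun _ _ => W)
  simp only [pushKer, Fintype.prod_sum]
  refine Fintype.sum_equiv restrict _ _ fun D => ?_
  rw [← σ.prod_comp, Fintype.prod_sigma, ← prod_mul_distrib]
  rfl

section Partitions

variable {n m : ℕ} {nk : Fin m → ℕ}

theorem mem_partitions {f : Fin n → Fin m} :
    f ∈ partitions n m nk ↔ ∀ k, #{i | f i = k} = nk k := by
  simp [partitions]

theorem partitions_nonempty (hsum : ∑ k, nk k = n) : (partitions n m nk).Nonempty := by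
  subst hsum
  refine ⟨fun i => (finSigmaFinEquiv.symm i).1, mem_partitions.2 fun k => ?_⟩
  rw [← Fintype.card_subtype, ← Fintype.card_fin (nk k)]
  exact Fintype.card_congr
    ((finSigmaFinEquiv.symm.subtypeEquiv fun _ => Iff.rfl).trans (Equiv.sigmaSubtype k))

theorem comp_perm_mem_partitions_iff {f : Fin n → Fin m} (σ : Equiv.Perm (Fin n)) :
    f ∘ σ ∈ partitions n m nk ↔ f ∈ partitions n m nk := by
  have hcard : ∀ k, #{i | f (σ i) = k} = #{i | f i = k} := fun k =>
    card_equiv σ fun i => by simp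
  simp only [mem_partitions, Function.comp_apply, hcard]

theorem card_filter_apply_eq (i j : Fin n) (k : Fin m) :
    #{f ∈ partitions n m nk | f i = k} = #{f ∈ partitions n m nk | f j = k} :=
  card_equiv ((Equiv.swap i j).arrowCongr (Equiv.refl _)) fun f => by
    simp [Equiv.arrowCongr, comp_perm_mem_partitions_iff]

theorem card_mul_card_filter_apply_eq (j : Fin n) (k : Fin m) :
    n * #{f ∈ partitions n m nk | f j = k} = nk k * #(partitions n m nk) := by
  calc n * #{f ∈ partitions n m nk | f j = k}
      = ∑ i : Fin n, #{f ∈ partitions n m nk | f i = k} := by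
        simp [card_filter_apply_eq _ j]
    _ = ∑ f ∈ partitions n m nk, #{i | f i = k} := by
        simp only [card_filter]
        exact sum_comm
    _ = nk k * #(partitions n m nk) := by
        rw [sum_congr rfl fun f hf => mem_partitions.1 hf k, sum_const, smul_eq_mul, mul_comm]

theorem inv_card_mul_sum_partitions_apply (hP : (partitions n m nk).Nonempty) (j : Fin n)
    (g : Fin m → ℝ) :
    (#(partitions n m nk) : ℝ)⁻¹ * ∑ f ∈ partitions n m nk, g (f j)
      = ∑ k, (nk k : ℝ) / n * g k := by
  have hn : (n : ℝ) ≠ 0 := by exact_mod_cast j.pos.ne'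
  have hP' : (#(partitions n m nk) : ℝ) ≠ 0 := by exact_mod_cast hP.card_pos.ne'
  rw [← sum_fiberwise _ (fun f => f j), mul_sum]
  refine sum_congr rfl fun k _ => ?_
  have hcount : (n : ℝ) * #{f ∈ partitions n m nk | f j = k} = nk k * #(partitions n m nk) := by
    exact_mod_cast card_mul_card_filter_apply_eq j k
  rw [sum_congr rfl fun f hf => by rw [(mem_filter.1 hf).2], sum_const, nsmul_eq_mul]
  field_simp
  linear_combination g k * hcount

end Partitions

section Blocks

variable {n m : ℕ} {nk : Fin m → ℕ} {f : Fin n → Fin m} {e : (k : Fin m) → Fin (nk k) → Fin n}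

theorem exists_block_apply_eq (hf : f ∈ partitions n m nk)
    (he : ∀ k, Function.Injective (e k) ∧ ∀ l, f (e k l) = k) (i : Fin n) :
    ∃ l, e (f i) l = i := by
  have himage : univ.image (e (f i)) = ({i' | f i' = f i} : Finset (Fin n)) := by
    refine eq_of_subset_of_card_le (fun i' hi' => ?_) ?_
    · obtain ⟨l, -, rfl⟩ := mem_image.1 hi'
      simp [(he _).2]
    · rw [mem_partitions.1 hf, card_image_of_injective _ (he _).1, card_univ, Fintype.card_fin]
  have hi : i ∈ univ.image (e (f i)) := by simp [himage]
  simpa using hi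

theorem bijective_sigma_block (hf : f ∈ partitions n m nk)
    (he : ∀ k, Function.Injective (e k) ∧ ∀ l, f (e k l) = k) :
    Function.Bijective fun p : Σ k, Fin (nk k) => e p.1 p.2 := by
  refine ⟨fun ⟨k, l⟩ ⟨k', l'⟩ h => ?_, fun i => ?_⟩
  · obtain rfl : k = k' := by rw [← (he k).2 l, ← (he k').2 l']; exact congrArg f h
    exact Sigma.ext rfl (heq_of_eq ((he k).1 h))
  · obtain ⟨l, hl⟩ := exists_block_apply_eq hf he i
    exact ⟨⟨f i, l⟩, hl⟩

end Blocks

theorem sum_le_exp_mul_sum_add_hsDiv_of_mem_partitions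
    {W A : Type*} [Fintype W] [DecidableEq W] [Fintype A] {n m : ℕ} {nk : Fin m → ℕ}
    (hpos : ∀ k, 0 < nk k) {ν : W → ℝ} (hν : IsPMF ν)
    {F : (k : Fin m) → (Fin (nk k) → W) → A → ℝ} (hF : ∀ k x, IsPMF (F k x))
    (hsym : ∀ k (σ : Equiv.Perm (Fin (nk k))) x, F k (x ∘ σ) = F k x)
    {f : Fin n → Fin m} (hf : f ∈ partitions n m nk) {e : (k : Fin m) → Fin (nk k) → Fin n}
    (he : ∀ k, Function.Injective (e k) ∧ ∀ l, f (e k l) = k) (j : Fin n) (ε : ℝ) (v w : W)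
    (S : Finset (Fin m → A)) :
    ∑ a ∈ S, ∑ D : Fin n → W,
        (∏ i, fixWeight j ν v i (D i)) * ∏ k, F k (fun l => D (e k l)) (a k)
      ≤ Real.exp ε * ∑ a ∈ S, ∑ D : Fin n → W,
          (∏ i, fixWeight j ν w i (D i)) * ∏ k, F k (fun l => D (e k l)) (a k)
        + hsDiv ε (pushKer (iidFix (hpos (f j)) ν v) (F (f j)))
            (pushKer (iidFix (hpos (f j)) ν w) (F (f j))) := by
  let σ := Equiv.ofBijective _ (bijective_sigma_block hf he)
  obtain ⟨l₀, hl₀⟩ := exists_block_apply_eq hf he j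
  set H : W → (k : Fin m) → A → ℝ :=
    fun u k => pushKer (fun x => ∏ l, fixWeight j ν u (e k l) (x l)) (F k)
  have hfactor : ∀ u (a : Fin m → A), ∑ D : Fin n → W,
      (∏ i, fixWeight j ν u i (D i)) * ∏ k, F k (fun l => D (e k l)) (a k) = ∏ k, H u k (a k) :=
    fun u a => sum_prod_mul_prod_eq_prod_pushKer σ (fixWeight j ν u) F a
  have hblock : ∀ u, H u (f j) = pushKer (iidFix (hpos (f j)) ν u) (F (f j)) := fun u => by
    simp only [H, fixWeight_comp_injective ν u (he (f j)).1 hl₀]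
    exact pushKer_prod_fixWeight_eq_iidFix _ ν u (hsym (f j)) l₀
  have hother : ∀ u, ∀ k ≠ f j, H u k = pushKer (fun x => ∏ l, ν (x l)) (F k) :=
    fun u k hk => by
      have hne : ∀ l, e k l ≠ j := fun l h => hk (by rw [← h, (he k).2])
      simp only [H, fixWeight_of_ne ν u (hne _)]
  have hpmf : ∀ k ≠ f j, IsPMF (H v k) := fun k hk => by
    rw [hother v k hk]
    exact hν.pi.pushKer (hF k)
  simp only [hfactor]
  rw [← hblock, ← hblock, ← hsDiv_pi_eq ε (f j)
    (fun k hk => (hother v k hk).trans (hother w k hk).symm) hpmf]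
  exact sum_le_exp_mul_sum_add_hsDiv ε _ _ S

theorem sum_mul_sum_le_exp_mul_sum_mul_sum_add {ι α : Type*} {P : Finset ι} {S : Finset α}
    {p q : ι → α → ℝ} {c : ι → ℝ} {ε t : ℝ} (ht : 0 ≤ t)
    (h : ∀ i ∈ P, ∑ a ∈ S, p i a ≤ Real.exp ε * ∑ a ∈ S, q i a + c i) :
    ∑ a ∈ S, t * ∑ i ∈ P, p i a
      ≤ Real.exp ε * ∑ a ∈ S, t * ∑ i ∈ P, q i a + t * ∑ i ∈ P, c i := by
  calc ∑ a ∈ S, t * ∑ i ∈ P, p i a = t * ∑ i ∈ P, ∑ a ∈ S, p i a := by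
        rw [← mul_sum, sum_comm]
    _ ≤ t * ∑ i ∈ P, (Real.exp ε * ∑ a ∈ S, q i a + c i) := by gcongr with i hi; exact h i hi
    _ = Real.exp ε * ∑ a ∈ S, t * ∑ i ∈ P, q i a + t * ∑ i ∈ P, c i := by
        rw [sum_add_distrib, ← mul_sum, ← mul_sum, sum_comm]
        ring

theorem iid_nonadaptive_composition_statistical_privacy_general
    {W A : Type*} [Fintype W] [DecidableEq W] [Fintype A]
    {n m : ℕ} (nk : Fin m → ℕ) (hpos : ∀ k, 0 < nk k)
    (hsum : ∑ k, nk k = n)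
    (ν : W → ℝ) (hν : IsPMF ν)
    (F : (k : Fin m) → (Fin (nk k) → W) → A → ℝ)
    (hF : ∀ k x, IsPMF (F k x))
    (hsym : ∀ (k : Fin m) (σ : Equiv.Perm (Fin (nk k))) (x : Fin (nk k) → W),
      F k (x ∘ σ) = F k x)
    (j : Fin n)
    -- `e f k` enumerates the `k`-th block of the partition `f`
    (e : (Fin n → Fin m) → (k : Fin m) → Fin (nk k) → Fin n)
    (he : ∀ f ∈ partitions n m nk, ∀ k,
      Function.Injective (e f k) ∧ ∀ l, f (e f k l) = k)
    (ε : ℝ) :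
    ∀ (v w : W) (S : Finset (Fin m → A)),
      ∑ a ∈ S, (((partitions n m nk).card : ℝ)⁻¹ *
          ∑ f ∈ partitions n m nk, ∑ D : Fin n → W,
            (∏ i, if i = j then (if D i = v then (1 : ℝ) else 0) else ν (D i)) *
              ∏ k, F k (fun l => D (e f k l)) (a k))
        ≤ Real.exp ε *
            (∑ a ∈ S, (((partitions n m nk).card : ℝ)⁻¹ *
              ∑ f ∈ partitions n m nk, ∑ D : Fin n → W,
                (∏ i, if i = j then (if D i = w then (1 : ℝ) else 0) else ν (D i)) *
                  ∏ k, F k (fun l => D (e f k l)) (a k)))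
          + ∑ k, ((nk k : ℝ) / n) *
              ⨆ v' : W, ⨆ w' : W,
                hsDiv ε (pushKer (iidFix (hpos k) ν v') (F k))
                        (pushKer (iidFix (hpos k) ν w') (F k)) := by
  intro v w S
  have hblock_bound : ∀ f ∈ partitions n m nk,
      ∑ a ∈ S, ∑ D : Fin n → W,
          (∏ i, fixWeight j ν v i (D i)) * ∏ k, F k (fun l => D (e f k l)) (a k)
        ≤ Real.exp ε * ∑ a ∈ S, ∑ D : Fin n → W,
            (∏ i, fixWeight j ν w i (D i)) * ∏ k, F k (fun l => D (e f k l)) (a k)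
          + ⨆ v' : W, ⨆ w' : W, hsDiv ε (pushKer (iidFix (hpos (f j)) ν v') (F (f j)))
              (pushKer (iidFix (hpos (f j)) ν w') (F (f j))) := fun f hf =>
    (sum_le_exp_mul_sum_add_hsDiv_of_mem_partitions hpos hν hF hsym hf (he f hf) j ε v w S).trans
      (by gcongr; exact Finite.le_ciSup_of_le v (Finite.le_ciSup_of_le w le_rfl))
  refine (sum_mul_sum_le_exp_mul_sum_mul_sum_add (by positivity) hblock_bound).trans_eq ?_
  congr 1
  exact inv_card_mul_sum_partitions_apply (partitions_nonempty hsum) j fun k =>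
    ⨆ v' : W, ⨆ w' : W, hsDiv ε (pushKer (iidFix (hpos k) ν v') (F k))
      (pushKer (iidFix (hpos k) ν w') (F k))

theorem iid_nonadaptive_composition_statistical_privacy
    {W A : Type*} [Fintype W] [DecidableEq W] [Nonempty W] [Fintype A]
    {n m : ℕ} (nk : Fin m → ℕ) (hpos : ∀ k, 0 < nk k)
    (hsum : ∑ k, nk k = n) (hn : 0 < n)
    (ν : W → ℝ) (hν : IsPMF ν)
    (F : (k : Fin m) → (Fin (nk k) → W) → A → ℝ)
    (hF : ∀ k x, IsPMF (F k x))
    (hsym : ∀ (k : Fin m) (σ : Equiv.Perm (Fin (nk k))) (x : Fin (nk k) → W),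
      F k (x ∘ σ) = F k x)
    (j : Fin n)
    -- `e f k` enumerates the `k`-th block of the partition `f`
    (e : (Fin n → Fin m) → (k : Fin m) → Fin (nk k) → Fin n)
    (he : ∀ f ∈ partitions n m nk, ∀ k,
      Function.Injective (e f k) ∧ ∀ l, f (e f k l) = k)
    (ε : ℝ) (hε : 0 ≤ ε) :
    ∀ (v w : W) (S : Finset (Fin m → A)),
      ∑ a ∈ S, (((partitions n m nk).card : ℝ)⁻¹ *
          ∑ f ∈ partitions n m nk, ∑ D : Fin n → W,
            (∏ i, if i = j then (if D i = v then (1 : ℝ) else 0) else ν (D i)) *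
              ∏ k, F k (fun l => D (e f k l)) (a k))
        ≤ Real.exp ε *
            (∑ a ∈ S, (((partitions n m nk).card : ℝ)⁻¹ *
              ∑ f ∈ partitions n m nk, ∑ D : Fin n → W,
                (∏ i, if i = j then (if D i = w then (1 : ℝ) else 0) else ν (D i)) *
                  ∏ k, F k (fun l => D (e f k l)) (a k)))
          + ∑ k, ((nk k : ℝ) / n) *
              ⨆ v' : W, ⨆ w' : W,
                hsDiv ε (pushKer (iidFix (hpos k) ν v') (F k))
                        (pushKer (iidFix (hpos k) ν w') (F k)) :=
  iid_nonadaptive_composition_statistical_privacy_general nk hpos hsum ν hν F hF hsym j e he ε
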